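/- Fix λ > 0 and define A : [0,∞) → ℝ^{2×2} by A(t) = [[-λ, eᵗ], [-eᵗ, -λ]], and h : [0,∞) → ℝ² by h(t) = λ·(sin(eᵗ), cos(eᵗ)). Then the function x*(t) = (1 − e^{-λt})·(sin(eᵗ), cos(eᵗ)) is differentiable, satisfies x*′(t) = A(t)x*(t) + h(t) for all t ≥ 0 with x*(0) = 0, and ‖x*(t)‖₂ = 1 − e^{-λt} → 1 as t → ∞; in particular x*(t) does not converge to 0. (Thus a perturbation in the class 𝒟 can destroy attractivity when A(t) is unbounded, even though the unperturbed system is globally uniformly exponentially stable.) -/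

import Mathlib

open Filter Matrix

/-- The unbounded rotation-type matrix `A(t) = [[-λ, eᵗ], [-eᵗ, -λ]]`. -/
noncomputable def Arot (lam : ℝ) : ℝ → Matrix (Fin 2) (Fin 2) ℝ := fun t =>
  Matrix.of ![![-lam, Real.exp t], ![-Real.exp t, -lam]]

/-- The perturbation `h(t) = λ·(sin(eᵗ), cos(eᵗ))`. -/
noncomputable def hRot (lam : ℝ) : ℝ → EuclideanSpace ℝ (Fin 2) := fun t =>
  (WithLp.equiv 2 (Fin 2 → ℝ)).symm
    ![lam * Real.sin (Real.exp t), lam * Real.cos (Real.exp t)]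

/-- The solution `x*(t) = (1 - e^{-λt})·(sin(eᵗ), cos(eᵗ))`. -/
noncomputable def xStar (lam : ℝ) : ℝ → EuclideanSpace ℝ (Fin 2) := fun t =>
  (WithLp.equiv 2 (Fin 2 → ℝ)).symm
    ![(1 - Real.exp (-lam * t)) * Real.sin (Real.exp t),
      (1 - Real.exp (-lam * t)) * Real.cos (Real.exp t)]

/-!
Write `x*(t) = (1 - e^{-λt}) u(t)` with the unit vector `u(t) = (sin eᵗ, cos eᵗ)`. The skew part
`eᵗ [[0, 1], [-1, 0]]` of `A(t)` is exactly the angular velocity of `u`, and on the radial factor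
`-λ (1 - e^{-λt}) + λ = λ e^{-λt}` is its derivative, so the equation `ẋ = A x + h` reduces to a
componentwise identity. The norm of `x*(t)` is `|1 - e^{-λt}|`, which tends to `1`.
-/

open Real WithLp Matrix

theorem hasDerivAt_toLp_vecCons {𝕜 : Type*} [NontriviallyNormedField 𝕜] (p : ENNReal) [Fact (1 ≤ p)]
    {f g : 𝕜 → 𝕜} {f' g' t : 𝕜} (hf : HasDerivAt f f' t) (hg : HasDerivAt g g' t) :
    HasDerivAt (fun s => toLp p ![f s, g s]) (toLp p ![f', g']) t :=
  (PiLp.hasFDerivAt_toLp (𝕜 := 𝕜) (E := fun _ : Fin 2 => 𝕜) p ![f t, g t]).comp_hasDerivAt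
    (f := fun s => ![f s, g s]) t (hasDerivAt_pi.2 (Fin.forall_fin_two.2 ⟨hf, hg⟩))

theorem EuclideanSpace.norm_toLp_vecCons (a b : ℝ) :
    ‖(toLp 2 ![a, b] : EuclideanSpace ℝ (Fin 2))‖ = √(a ^ 2 + b ^ 2) := by
  simp [EuclideanSpace.norm_eq, Fin.sum_univ_two]

theorem toEuclideanLin_Arot_toLp (lam t a b : ℝ) :
    toEuclideanLin (Arot lam t) (toLp 2 ![a, b]) =
      toLp 2 ![-lam * a + exp t * b, -exp t * a - lam * b] := by
  ext i
  fin_cases i <;>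
    simp only [Arot, toLpLin_apply, mulVec_cons, mulVec_empty, add_zero, toLp_add, toLp_smul,
      Fin.zero_eta, Fin.mk_one, Fin.isValue, PiLp.add_apply, PiLp.smul_apply, cons_val_zero, cons_val_one,
      cons_val_fin_one, head_cons, tail_cons, smul_eq_mul, Function.comp_apply]
    <;> ring

theorem hasDerivAt_xStar (lam t : ℝ) :
    HasDerivAt (xStar lam) (toEuclideanLin (Arot lam t) (xStar lam t) + hRot lam t) t := by
  have hφ : HasDerivAt (fun s => 1 - exp (-lam * s)) (exp (-lam * t) * lam) t := by
    simpa using (((hasDerivAt_id t).const_mul (-lam)).exp.const_sub 1)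
  have hsin := (hasDerivAt_sin (exp t)).comp t (hasDerivAt_exp t)
  have hcos := (hasDerivAt_cos (exp t)).comp t (hasDerivAt_exp t)
  convert hasDerivAt_toLp_vecCons 2 (hφ.mul hsin) (hφ.mul hcos) using 1
  · rfl
  simp only [xStar, hRot, WithLp.equiv_symm_apply, toEuclideanLin_Arot_toLp]
  ext i
  fin_cases i <;>
    simp only [Fin.zero_eta, Fin.mk_one, Fin.isValue, PiLp.add_apply, cons_val_zero, cons_val_one,
      cons_val_fin_one, Function.comp_apply] <;> ring

theorem norm_xStar (lam t : ℝ) : ‖xStar lam t‖ = |1 - exp (-lam * t)| := by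
  rw [xStar, WithLp.equiv_symm_apply, EuclideanSpace.norm_toLp_vecCons, ← sqrt_sq_eq_abs]
  congr 1
  linear_combination (1 - exp (-lam * t)) ^ 2 * sin_sq_add_cos_sq (exp t)

theorem xStar_zero (lam : ℝ) : xStar lam 0 = 0 := by
  ext i; fin_cases i <;> simp [xStar]

theorem tendsto_one_sub_exp_neg_mul_atTop {lam : ℝ} (hlam : 0 < lam) :
    Tendsto (fun t => 1 - exp (-lam * t)) atTop (nhds 1) := by
  simpa using tendsto_const_nhds.sub
    (tendsto_exp_atBot.comp (tendsto_id.const_mul_atTop_of_neg (neg_neg_iff_pos.2 hlam)))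

/-- `x*` solves `ẋ = A(t)x + h(t)` with `x*(0) = 0`, and
`‖x*(t)‖₂ = 1 - e^{-λt} → 1`, so `x*` does not converge to `0`: a perturbation
in the class 𝒟 can destroy attractivity when `A(t)` is unbounded. -/
theorem stmt_12 (lam : ℝ) (hlam : 0 < lam) :
    (∀ t : ℝ, 0 ≤ t →
      HasDerivAt (xStar lam)
        (Matrix.toEuclideanLin (Arot lam t) (xStar lam t) + hRot lam t) t) ∧
    xStar lam 0 = 0 ∧
    (∀ t : ℝ, 0 ≤ t → ‖xStar lam t‖ = 1 - Real.exp (-lam * t)) ∧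
    Tendsto (fun t : ℝ => ‖xStar lam t‖) atTop (nhds 1) ∧
    ¬ Tendsto (xStar lam) atTop (nhds 0) := by
  have hnorm (t : ℝ) (ht : 0 ≤ t) : ‖xStar lam t‖ = 1 - exp (-lam * t) := by
    have hexp : exp (-lam * t) ≤ 1 := exp_le_one_iff.2 (by nlinarith)
    rw [norm_xStar, abs_of_nonneg (sub_nonneg.2 hexp)]
  have hlim : Tendsto (fun t => ‖xStar lam t‖) atTop (nhds 1) := by
    simpa only [norm_xStar, abs_one] using (tendsto_one_sub_exp_neg_mul_atTop hlam).abs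
  refine ⟨fun t _ => hasDerivAt_xStar lam t, xStar_zero lam, hnorm, hlim, fun h => ?_⟩
  exact one_ne_zero (tendsto_nhds_unique hlim (by simpa only [norm_zero] using h.norm))
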